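/- Suppose α2·β2 > α1·β1, β1 < α2, and 1/α1 + 1/α2 = 1/β1 + 1/β2. Then for every y0 with δ < y0 < δ^(β1/α2), the g-orbit of (1, y0; E) is periodic with period four and passes successively through the states S, R, S: g(1, y0; E) = (δ, δ^(−β1/α2)·y0; S), g²(1, y0; E) = (δ^(1 + α1/α2)·y0^(−α1/β1), 1; R), g³(1, y0; E) = (δ^(1 + α1/α2 − α1/β2)·y0^(−α1/β1), δ; S), and g⁴(1, y0; E) = (1, δ^(1 + β1/β2 − β1/α1 − β1/α2)·y0; E) = (1, y0; E). Hence there are infinitely many period-two orbits of the first-return map on Σ (one for each such y0), of type E → S → R → S → E. -/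
import Mathlib


/-- The discrete state of a cow: eating, resting (lying down), or standing. -/
inductive CowState
  | E | R | S
deriving DecidableEq

open CowState

/-- The Poincaré map `g` of the single-cow model, acting on points
`(x, y; θ)` of the boundary of the square `[δ,1]²` together with a state label.
Powers are real powers (`Real.rpow`). -/
noncomputable def g (α1 α2 β1 β2 δ : ℝ) : ℝ × ℝ × CowState → ℝ × ℝ × CowState
  | (_x, y, .E) =>
      if δ ^ (β1 / α2) ≤ y then (y ^ (α2 / β1), 1, R)
      else (δ, δ ^ (-(β1 / α2)) * y, S)
  | (x, _y, .R) =>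
      if δ ^ (α1 / β2) ≤ x then (1, x ^ (β2 / α1), E)
      else (δ ^ (-(α1 / β2)) * x, δ, S)
  | (x, y, .S) =>
      if x = δ then
        -- on the edge `x = δ`
        (if y ≤ δ ^ (β1 / α1) then (1, δ ^ (-(β1 / α1)) * y, E)
         else (y ^ (-(α1 / β1)) * δ, 1, R))
      else
        -- on the edge `y = δ`
        (if δ ^ (α1 / β1) ≤ x then (1, x ^ (-(β1 / α1)) * δ, E)
         else (δ ^ (-(α1 / β1)) * x, 1, R))

/-- The Poincaré section `Σ = {(1,y;E) : δ ≤ y ≤ 1} ∪ {(x,1;R) : δ ≤ x < 1}`. -/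
def inSigma (δ : ℝ) : ℝ × ℝ × CowState → Prop
  | (x, y, .E) => x = 1 ∧ δ ≤ y ∧ y ≤ 1
  | (x, y, .R) => δ ≤ x ∧ x < 1 ∧ y = 1
  | (_, _, .S) => False

/-- The first-return map `f` on the Poincaré section `Σ`:
`f(w) = g(w)` if `g(w) ∈ Σ`, and `f(w) = g(g(w))` otherwise. -/
noncomputable def f (α1 α2 β1 β2 δ : ℝ) (w : ℝ × ℝ × CowState) : ℝ × ℝ × CowState := by
  classical
  exact if inSigma δ (g α1 α2 β1 β2 δ w) then g α1 α2 β1 β2 δ w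
        else g α1 α2 β1 β2 δ (g α1 α2 β1 β2 δ w)

/-- Case D: if `α2·β2 > α1·β1`, `β1 < α2`, and
`1/α1 + 1/α2 = 1/β1 + 1/β2`, then for every `y0` with `δ < y0 < δ^(β1/α2)`,
the `g`-orbit of `(1,y0;E)` is periodic with period four, passing successively
through the states S, R, S:
`g(1,y0;E) = (δ, δ^(−β1/α2)·y0; S)`,
`g²(1,y0;E) = (δ^(1+α1/α2)·y0^(−α1/β1), 1; R)`,
`g³(1,y0;E) = (δ^(1+α1/α2−α1/β2)·y0^(−α1/β1), δ; S)`, and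
`g⁴(1,y0;E) = (1, δ^(1+β1/β2−β1/α1−β1/α2)·y0; E) = (1, y0; E)`.
Hence there are infinitely many period-two orbits of the first-return map `f`
on `Σ` (one for each such `y0`), of type E → S → R → S → E. -/
theorem period_two_orbits_case_D
    (α1 α2 β1 β2 δ : ℝ)
    (hα1 : 0 < α1) (hα2 : 0 < α2) (hβ1 : 0 < β1) (hβ2 : 0 < β2)
    (hδ0 : 0 < δ) (hδ1 : δ < 1)
    (hgt : α1 * β1 < α2 * β2)
    (hba : β1 < α2)
    (heq : 1 / α1 + 1 / α2 = 1 / β1 + 1 / β2) :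
    ∀ y0 : ℝ, δ < y0 → y0 < δ ^ (β1 / α2) →
      g α1 α2 β1 β2 δ (1, y0, E) = (δ, δ ^ (-(β1 / α2)) * y0, S) ∧
      (g α1 α2 β1 β2 δ)^[2] (1, y0, E)
        = (δ ^ (1 + α1 / α2) * y0 ^ (-(α1 / β1)), 1, R) ∧
      (g α1 α2 β1 β2 δ)^[3] (1, y0, E)
        = (δ ^ (1 + α1 / α2 - α1 / β2) * y0 ^ (-(α1 / β1)), δ, S) ∧
      (g α1 α2 β1 β2 δ)^[4] (1, y0, E)
        = (1, δ ^ (1 + β1 / β2 - β1 / α1 - β1 / α2) * y0, E) ∧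
      (g α1 α2 β1 β2 δ)^[4] (1, y0, E) = (1, y0, E) ∧
      f α1 α2 β1 β2 δ (f α1 α2 β1 β2 δ (1, y0, E)) = (1, y0, E) := by
  intro y0 hy1 hy2
  have hy0 : 0 < y0 := hδ0.trans hy1
  have hδne : δ ≠ 0 := hδ0.ne'
  have hy0lt1 : y0 < 1 := hy2.trans (Real.rpow_lt_one hδ0.le hδ1 (by positivity))
  -- exponent identities
  have e2 : 1 + α1 / α2 - α1 / β1 = α1 / β2 := by
    field_simp at heq ⊢; nlinarith [heq]
  have e0 : 1 + β1 / β2 - β1 / α1 - β1 / α2 = 0 := by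
    field_simp at heq ⊢; nlinarith [heq]
  have e1 : β1 / α1 + β1 / α2 = 1 + β1 / β2 := by linarith
  -- Step 1
  have hg1 : g α1 α2 β1 β2 δ (1, y0, E) = (δ, δ ^ (-(β1 / α2)) * y0, S) := by
    simp only [g]; rw [if_neg (not_le.2 hy2)]
  -- Step 2
  have hkey2 : δ ^ (β1 / α1) < δ ^ (-(β1 / α2)) * y0 := by
    have h1 : δ ^ (β1 / α1 + β1 / α2) < y0 := by
      calc δ ^ (β1 / α1 + β1 / α2) < δ ^ (1 : ℝ) := by
              apply Real.rpow_lt_rpow_of_exponent_gt hδ0 hδ1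
              rw [e1]; have : 0 < β1 / β2 := by positivity
              linarith
        _ = δ := Real.rpow_one δ
        _ < y0 := hy1
    calc δ ^ (β1 / α1) = δ ^ (-(β1 / α2)) * δ ^ (β1 / α1 + β1 / α2) := by
            rw [← Real.rpow_add hδ0]; ring_nf
      _ < δ ^ (-(β1 / α2)) * y0 :=
            mul_lt_mul_of_pos_left h1 (Real.rpow_pos_of_pos hδ0 _)
  have hprod2 : (δ ^ (-(β1 / α2)) * y0) ^ (-(α1 / β1)) * δ
      = δ ^ (1 + α1 / α2) * y0 ^ (-(α1 / β1)) := by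
    rw [Real.mul_rpow (Real.rpow_pos_of_pos hδ0 _).le hy0.le, ← Real.rpow_mul hδ0.le,
      mul_right_comm, ← Real.rpow_add_one hδne]
    congr 2
    field_simp; ring
  have hg2 : g α1 α2 β1 β2 δ (δ, δ ^ (-(β1 / α2)) * y0, S)
      = (δ ^ (1 + α1 / α2) * y0 ^ (-(α1 / β1)), 1, R) := by
    simp only [g]; rw [if_pos trivial, if_neg (not_le.2 hkey2), hprod2]
  -- Step 3
  have hkey3 : δ ^ (1 + α1 / α2) * y0 ^ (-(α1 / β1)) < δ ^ (α1 / β2) := by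
    have h1 : y0 ^ (-(α1 / β1)) < δ ^ (-(α1 / β1)) :=
      Real.rpow_lt_rpow_of_neg hδ0 hy1 (by simp; positivity)
    calc δ ^ (1 + α1 / α2) * y0 ^ (-(α1 / β1))
        < δ ^ (1 + α1 / α2) * δ ^ (-(α1 / β1)) :=
          mul_lt_mul_of_pos_left h1 (Real.rpow_pos_of_pos hδ0 _)
      _ = δ ^ (α1 / β2) := by
          rw [← Real.rpow_add hδ0, show 1 + α1 / α2 + -(α1 / β1) = α1 / β2 by linarith]
  have hprod3 : δ ^ (-(α1 / β2)) * (δ ^ (1 + α1 / α2) * y0 ^ (-(α1 / β1)))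
      = δ ^ (1 + α1 / α2 - α1 / β2) * y0 ^ (-(α1 / β1)) := by
    rw [← mul_assoc, ← Real.rpow_add hδ0]; congr 2; ring
  have hg3 : g α1 α2 β1 β2 δ (δ ^ (1 + α1 / α2) * y0 ^ (-(α1 / β1)), 1, R)
      = (δ ^ (1 + α1 / α2 - α1 / β2) * y0 ^ (-(α1 / β1)), δ, S) := by
    simp only [g]; rw [if_neg (not_le.2 hkey3), hprod3]
  -- Step 4
  have hc : 1 + α1 / α2 - α1 / β2 = α1 / β1 := by linarith
  have hx3gt : δ < δ ^ (1 + α1 / α2 - α1 / β2) * y0 ^ (-(α1 / β1)) := by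
    have h1 : (δ ^ (β1 / α2)) ^ (-(α1 / β1)) < y0 ^ (-(α1 / β1)) :=
      Real.rpow_lt_rpow_of_neg hy0 hy2 (by simp; positivity)
    have h2 : δ ^ (1 + α1 / α2 - α1 / β2) * (δ ^ (β1 / α2)) ^ (-(α1 / β1)) = δ ^ (α1 / β1 - α1 / α2) := by
      rw [← Real.rpow_mul hδ0.le, ← Real.rpow_add hδ0]
      congr 1; rw [hc]; field_simp; ring
    have h3 : δ ^ ((1:ℝ)) < δ ^ (α1 / β1 - α1 / α2) := by
      apply Real.rpow_lt_rpow_of_exponent_gt hδ0 hδ1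
      have : 0 < α1 / β2 := by positivity
      linarith
    calc δ = δ ^ (1:ℝ) := (Real.rpow_one δ).symm
      _ < δ ^ (α1 / β1 - α1 / α2) := h3
      _ = δ ^ (1 + α1 / α2 - α1 / β2) * (δ ^ (β1 / α2)) ^ (-(α1 / β1)) := h2.symm
      _ < δ ^ (1 + α1 / α2 - α1 / β2) * y0 ^ (-(α1 / β1)) :=
          mul_lt_mul_of_pos_left h1 (Real.rpow_pos_of_pos hδ0 _)
  have hx3ne : δ ^ (1 + α1 / α2 - α1 / β2) * y0 ^ (-(α1 / β1)) ≠ δ := hx3gt.ne'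
  have hx3ge : δ ^ (α1 / β1) ≤ δ ^ (1 + α1 / α2 - α1 / β2) * y0 ^ (-(α1 / β1)) := by
    have h1 : 1 < y0 ^ (-(α1 / β1)) := by
      rw [Real.one_lt_rpow_iff_of_pos hy0]
      right; constructor
      · exact hy0lt1
      · simp; positivity
    calc δ ^ (α1 / β1) = δ ^ (1 + α1 / α2 - α1 / β2) * 1 := by rw [hc, mul_one]
      _ ≤ δ ^ (1 + α1 / α2 - α1 / β2) * y0 ^ (-(α1 / β1)) :=
          mul_le_mul_of_nonneg_left h1.le (Real.rpow_pos_of_pos hδ0 _).le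
  have hprod4 : (δ ^ (1 + α1 / α2 - α1 / β2) * y0 ^ (-(α1 / β1))) ^ (-(β1 / α1)) * δ
      = δ ^ (1 + β1 / β2 - β1 / α1 - β1 / α2) * y0 := by
    rw [Real.mul_rpow (Real.rpow_pos_of_pos hδ0 _).le (Real.rpow_pos_of_pos hy0 _).le,
      ← Real.rpow_mul hδ0.le, ← Real.rpow_mul hy0.le, mul_right_comm,
      ← Real.rpow_add_one hδne]
    have hy : y0 ^ (-(α1 / β1) * -(β1 / α1)) = y0 := by
      rw [show -(α1 / β1) * -(β1 / α1) = 1 by field_simp, Real.rpow_one]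
    rw [hy]
    congr 2
    field_simp
    ring
  have hg4 : g α1 α2 β1 β2 δ (δ ^ (1 + α1 / α2 - α1 / β2) * y0 ^ (-(α1 / β1)), δ, S)
      = (1, δ ^ (1 + β1 / β2 - β1 / α1 - β1 / α2) * y0, E) := by
    simp only [g]; rw [if_neg hx3ne, if_pos hx3ge, hprod4]
  have hδ0pow : δ ^ (1 + β1 / β2 - β1 / α1 - β1 / α2) * y0 = y0 := by
    rw [e0, Real.rpow_zero, one_mul]
  -- assemble iterates
  have it2 : (g α1 α2 β1 β2 δ)^[2] (1, y0, E)
      = (δ ^ (1 + α1 / α2) * y0 ^ (-(α1 / β1)), 1, R) := by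
    simp only [Function.iterate_succ, Function.iterate_zero, Function.comp_apply, id_eq]
    rw [hg1, hg2]
  have it3 : (g α1 α2 β1 β2 δ)^[3] (1, y0, E)
      = (δ ^ (1 + α1 / α2 - α1 / β2) * y0 ^ (-(α1 / β1)), δ, S) := by
    simp only [Function.iterate_succ, Function.iterate_zero, Function.comp_apply, id_eq]
    rw [hg1, hg2, hg3]
  have it4 : (g α1 α2 β1 β2 δ)^[4] (1, y0, E)
      = (1, δ ^ (1 + β1 / β2 - β1 / α1 - β1 / α2) * y0, E) := by
    simp only [Function.iterate_succ, Function.iterate_zero, Function.comp_apply, id_eq]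
    rw [hg1, hg2, hg3, hg4]
  refine ⟨hg1, it2, it3, it4, by rw [it4, hδ0pow], ?_⟩
  -- the first-return map
  have hns1 : ¬ inSigma δ (δ, δ ^ (-(β1 / α2)) * y0, S) := by simp [inSigma]
  have hns3 : ¬ inSigma δ (δ ^ (1 + α1 / α2 - α1 / β2) * y0 ^ (-(α1 / β1)), δ, S) := by
    simp [inSigma]
  have hf1 : f α1 α2 β1 β2 δ (1, y0, E) = (δ ^ (1 + α1 / α2) * y0 ^ (-(α1 / β1)), 1, R) := by
    simp only [f]
    rw [hg1, if_neg hns1, hg2]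
  have hf2 : f α1 α2 β1 β2 δ (δ ^ (1 + α1 / α2) * y0 ^ (-(α1 / β1)), 1, R) = (1, y0, E) := by
    simp only [f]
    rw [hg3, if_neg hns3, hg4, hδ0pow]
  rw [hf1, hf2]
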